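/- Let f : F_2^{n-1} → F_2^m be a quadratic APN function, L : F_2^{n-1} → F_2^m linear, c ∈ F_2^m, and suppose g(x) := f(x) + L(x) + c is also APN. Fix e₀ ∈ F_2^n \ F_2^{n-1} and define F : F_2^n → F_2^m by F(x) = f(x) and F(x+e₀) = f(x)+L(x)+c for x ∈ F_2^{n-1}. Then F is APN if and only if for every A ∈ F_2^{n-1}, the map x ↦ L(x) + B_f(x, A) from F_2^{n-1} to F_2^m is injective, where B_f(x,A) = f(x+A)+f(x)+f(A)+f(0). -/

import Mathlib

/-!
Write `D_a g x = g (x + a) + g x`. For quadratic `f` one has `D_a f x + D_a f y = B_f (x + y) a`,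
so collisions of derivatives of `f` are read off from the bilinear form.
In a direction `(a, 0)`, the derivative of `F` on the level `V × {δ}` is `D_a f` shifted by the
constant `δ • L a`: collisions within a level are controlled by `f` being APN, while a collision
`(x, 0)`, `(y, 1)` across the levels means `L a + B_f a (x + y) = 0`.
In a direction `(a, 1)`, the derivative on each level is `x ↦ L x + B_f x a` plus a constant, and
shifting by `(a, 1)` swaps the levels, so APN in that direction is exactly injectivity of
`x ↦ L x + B_f x a`.
-/

/-- `f` is almost perfect nonlinear. -/
def IsAPN {V W : Type*} [AddCommGroup V] [AddCommGroup W] (f : V → W) : Prop :=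
  ∀ a : V, a ≠ 0 → ∀ b : W, {x : V | f (x + a) + f x = b}.ncard ≤ 2

/-- `B_f(x,y) = f(x+y) + f(x) + f(y) + f(0)`. -/
def Bf {V W : Type*} [AddCommGroup V] [AddCommGroup W] (f : V → W) (x y : V) : W :=
  f (x + y) + f x + f y + f 0

/-- `f` is quadratic: `B_f` is `F_2`-bilinear (additive in each argument;
it is symmetric by definition). -/
def IsQuadratic {V W : Type*} [AddCommGroup V] [AddCommGroup W] (f : V → W) : Prop :=
  ∀ x₁ x₂ y : V, Bf f (x₁ + x₂) y = Bf f x₁ y + Bf f x₂ y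

open ZModModule Function

theorem ZMod.eq_zero_or_eq_one_of_two (δ : ZMod 2) : δ = 0 ∨ δ = 1 := by
  revert δ; decide

theorem ZMod.eq_or_eq_add_one_of_two (δ δ' : ZMod 2) : δ' = δ ∨ δ' = δ + 1 := by
  revert δ δ'; decide

section Quadratic

variable {V W : Type*} [AddCommGroup V] [AddCommGroup W]

def discreteDeriv (f : V → W) (a x : V) : W := f (x + a) + f x

theorem Bf_comm (f : V → W) (x y : V) : Bf f x y = Bf f y x := by
  simp only [Bf, add_comm x y, add_right_comm (f (y + x)) (f x) (f y)]

theorem discreteDeriv_eq_Bf_add [Module (ZMod 2) W] (f : V → W) (a x : V) :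
    discreteDeriv f a x = Bf f x a + (f a + f 0) := by
  unfold discreteDeriv Bf
  linear_combination (norm := module) -add_self (f a) - add_self (f 0)

theorem discreteDeriv_add_self [Module (ZMod 2) V] (f : V → W) (a x : V) :
    discreteDeriv f a (x + a) = discreteDeriv f a x := by
  rw [discreteDeriv, discreteDeriv, add_assoc, add_self, add_zero, add_comm]

theorem isAPN_iff [Module (ZMod 2) V] [Finite V] {f : V → W} :
    IsAPN f ↔ ∀ a ≠ 0, ∀ x y, discreteDeriv f a x = discreteDeriv f a y → y = x ∨ y = x + a := by
  constructor
  · intro hf a ha x y hxy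
    by_contra! hy
    have hxa : x ≠ x + a := by simpa using ha
    exact (hf a ha (discreteDeriv f a x)).not_gt ((Set.two_lt_ncard (Set.toFinite _)).mpr
      ⟨x, rfl, x + a, discreteDeriv_add_self f a x, y, hxy.symm, hxa, hy.1.symm, hy.2.symm⟩)
  · intro hf a ha b
    by_contra! hb
    obtain ⟨x, hx, y, hy, z, hz, hxy, hxz, hyz⟩ :=
      (Set.two_lt_ncard (Set.finite_of_ncard_pos (by omega))).mp hb
    obtain rfl := (hf a ha x y (hx.trans hy.symm)).resolve_left hxy.symm
    obtain rfl := (hf a ha x z (hx.trans hz.symm)).resolve_left hxz.symm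
    exact hyz rfl

theorem IsQuadratic.discreteDeriv_eq_add_iff [Module (ZMod 2) W] {f : V → W} (hf : IsQuadratic f)
    {a x y : V} {w : W} : discreteDeriv f a x = discreteDeriv f a y + w ↔ Bf f (x + y) a = w := by
  rw [hf, discreteDeriv_eq_Bf_add, discreteDeriv_eq_Bf_add, add_right_comm, add_left_inj,
    ← sub_eq_iff_eq_add', sub_eq_add]

def IsQuadratic.polar {f : V → W} (hf : IsQuadratic f) (y : V) : V →+ W :=
  AddMonoidHom.mk' (fun x => Bf f x y) fun x₁ x₂ => hf x₁ x₂ y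

theorem IsQuadratic.injective_add_Bf_iff [Module (ZMod 2) V] [Module (ZMod 2) W] {f : V → W}
    (hf : IsQuadratic f) (L : V →ₗ[ZMod 2] W) (A : V) :
    Injective (fun x => L x + Bf f x A) ↔ ∀ z, L z + Bf f z A = 0 → z = 0 :=
  injective_iff_map_eq_zero (L.toAddMonoidHom + hf.polar A)

end Quadratic

section Extension

variable {V W : Type*} [AddCommGroup V] [AddCommGroup W] {f : V → W} {F : V × ZMod 2 → W}

theorem discreteDeriv_mk_zero_mk_zero (hF0 : ∀ x, F (x, 0) = f x) (a x : V) :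
    discreteDeriv F (a, 0) (x, 0) = discreteDeriv f a x := by
  simp only [discreteDeriv, Prod.mk_add_mk, add_zero, hF0]

variable [Module (ZMod 2) V] [Module (ZMod 2) W] {L : V →ₗ[ZMod 2] W} {c : W}

theorem discreteDeriv_mk_zero_mk_one (hF1 : ∀ x, F (x, 1) = f x + L x + c) (a x : V) :
    discreteDeriv F (a, 0) (x, 1) = discreteDeriv f a x + L a := by
  simp only [discreteDeriv, Prod.mk_add_mk, add_zero, hF1, map_add]
  linear_combination (norm := module) add_self (L x) + add_self c

theorem discreteDeriv_mk_one_mk (hF0 : ∀ x, F (x, 0) = f x)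
    (hF1 : ∀ x, F (x, 1) = f x + L x + c) (a x : V) (δ : ZMod 2) :
    discreteDeriv F (a, 1) (x, δ) = L x + Bf f x a + discreteDeriv F (a, 1) (0, δ) := by
  rcases δ.eq_zero_or_eq_one_of_two with rfl | rfl
  · simp only [discreteDeriv, Bf, Prod.mk_add_mk, zero_add, hF0, hF1, map_add]
    linear_combination (norm := module) -add_self (f a) - add_self (f 0)
  · simp only [discreteDeriv, Bf, Prod.mk_add_mk, zero_add, add_self, hF0, hF1, map_zero]
    linear_combination (norm := module) -add_self (f a) - add_self (f 0)

theorem eq_or_eq_add_of_discreteDeriv_mk_zero_eq [Finite V] (hf : IsQuadratic f) (hfAPN : IsAPN f)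
    (hF0 : ∀ x, F (x, 0) = f x) (hF1 : ∀ x, F (x, 1) = f x + L x + c)
    (hker : ∀ A z, L z + Bf f z A = 0 → z = 0) {a : V} (ha : a ≠ 0) {p q : V × ZMod 2}
    (h : discreteDeriv F (a, 0) p = discreteDeriv F (a, 0) q) : q = p ∨ q = p + (a, 0) := by
  obtain ⟨x, δ⟩ := p
  obtain ⟨y, δ'⟩ := q
  have same_level : ∀ δ : ZMod 2, discreteDeriv f a x = discreteDeriv f a y →
      (y, δ) = (x, δ) ∨ (y, δ) = (x, δ) + (a, 0) := fun δ hxy =>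
    (isAPN_iff.mp hfAPN a ha x y hxy).imp (by rintro rfl; rfl)
      (by rintro rfl; rw [Prod.mk_add_mk, add_zero])
  have cross_level : ∀ x y, discreteDeriv f a x ≠ discreteDeriv f a y + L a := fun x y hxy =>
    ha <| hker (x + y) a <| by rw [Bf_comm, hf.discreteDeriv_eq_add_iff.mp hxy, add_self]
  rcases δ.eq_zero_or_eq_one_of_two with rfl | rfl <;>
    rcases δ'.eq_zero_or_eq_one_of_two with rfl | rfl <;>
    simp only [discreteDeriv_mk_zero_mk_zero hF0, discreteDeriv_mk_zero_mk_one hF1] at h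
  · exact same_level 0 h
  · exact (cross_level x y h).elim
  · exact (cross_level y x h.symm).elim
  · exact same_level 1 (add_left_injective _ h)

theorem eq_or_eq_add_of_discreteDeriv_mk_one_eq (hF0 : ∀ x, F (x, 0) = f x)
    (hF1 : ∀ x, F (x, 1) = f x + L x + c) {a : V} (hinj : Injective (fun x => L x + Bf f x a))
    {p q : V × ZMod 2} (h : discreteDeriv F (a, 1) p = discreteDeriv F (a, 1) q) :
    q = p ∨ q = p + (a, 1) := by
  have same_level : ∀ {x y : V} {δ : ZMod 2},
      discreteDeriv F (a, 1) (x, δ) = discreteDeriv F (a, 1) (y, δ) → x = y := fun {x y _} hxy =>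
    hinj <| by rwa [discreteDeriv_mk_one_mk hF0 hF1 a x, discreteDeriv_mk_one_mk hF0 hF1 a y,
      add_left_inj] at hxy
  obtain ⟨x, δ⟩ := p
  obtain ⟨y, δ'⟩ := q
  obtain rfl | rfl := δ.eq_or_eq_add_one_of_two δ'
  · exact .inl (by rw [same_level h])
  · rw [← discreteDeriv_add_self F (a, 1), Prod.mk_add_mk] at h
    exact .inr (by rw [← same_level h, Prod.mk_add_mk])

theorem injective_of_isAPN_extension [Finite V] (hf : IsQuadratic f)
    (hF0 : ∀ x, F (x, 0) = f x) (hF1 : ∀ x, F (x, 1) = f x + L x + c) (hF : IsAPN F) (A : V) :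
    Injective (fun x => L x + Bf f x A) := by
  refine (hf.injective_add_Bf_iff L A).mpr fun z hz => ?_
  by_contra hz0
  -- otherwise `(0, 0)` and `(A, 1)` collide under the derivative of `F` in direction `(z, 0)`
  have hBf : Bf f (0 + A) z = L z := by
    rw [zero_add, Bf_comm, ← neg_eq_self (L z), ← add_eq_zero_iff_eq_neg', hz]
  have hcollide : discreteDeriv F (z, 0) (0, 0) = discreteDeriv F (z, 0) (A, 1) := by
    rw [discreteDeriv_mk_zero_mk_zero hF0, discreteDeriv_mk_zero_mk_one hF1]
    exact hf.discreteDeriv_eq_add_iff.mpr hBf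
  have := isAPN_iff.mp hF (z, 0) (by simpa using hz0) _ _ hcollide
  simp at this

theorem isAPN_extension_iff [Finite V] (hf : IsQuadratic f) (hfAPN : IsAPN f)
    (hF0 : ∀ x, F (x, 0) = f x) (hF1 : ∀ x, F (x, 1) = f x + L x + c) :
    IsAPN F ↔ ∀ A, Injective (fun x => L x + Bf f x A) := by
  refine ⟨injective_of_isAPN_extension hf hF0 hF1, fun hinj => isAPN_iff.mpr ?_⟩
  rintro ⟨a, ε⟩ hA p q h
  rcases ε.eq_zero_or_eq_one_of_two with rfl | rfl
  · exact eq_or_eq_add_of_discreteDeriv_mk_zero_eq hf hfAPN hF0 hF1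
      (fun A => (hf.injective_add_Bf_iff L A).mp (hinj A)) (by simpa using hA) h
  · exact eq_or_eq_add_of_discreteDeriv_mk_one_eq hF0 hF1 (hinj a) h

end Extension

/- `F_2^n` is identified with `F_2^{n-1} × F_2`, the hyperplane `F_2^{n-1}` being
`F_2^{n-1} × {0}` and `e₀ = (0,1)`. -/
theorem stmt7_general (n m : ℕ)
    (f : (Fin (n - 1) → ZMod 2) → (Fin m → ZMod 2))
    (hfq : IsQuadratic f) (hfAPN : IsAPN f)
    (L : (Fin (n - 1) → ZMod 2) →ₗ[ZMod 2] (Fin m → ZMod 2))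
    (c : Fin m → ZMod 2)
    (F : ((Fin (n - 1) → ZMod 2) × ZMod 2) → (Fin m → ZMod 2))
    (hF0 : ∀ x, F (x, 0) = f x)
    (hF1 : ∀ x, F (x, 1) = f x + L x + c) :
    IsAPN F ↔
      ∀ A : Fin (n - 1) → ZMod 2,
        Function.Injective (fun x => L x + Bf f x A) :=
  isAPN_extension_iff hfq hfAPN hF0 hF1

theorem stmt7 (n m : ℕ)
    (f : (Fin (n - 1) → ZMod 2) → (Fin m → ZMod 2))
    (hfq : IsQuadratic f) (hfAPN : IsAPN f)
    (L : (Fin (n - 1) → ZMod 2) →ₗ[ZMod 2] (Fin m → ZMod 2))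
    (c : Fin m → ZMod 2)
    (hgAPN : IsAPN (fun x => f x + L x + c))
    (F : ((Fin (n - 1) → ZMod 2) × ZMod 2) → (Fin m → ZMod 2))
    (hF0 : ∀ x, F (x, 0) = f x)
    (hF1 : ∀ x, F (x, 1) = f x + L x + c) :
    IsAPN F ↔
      ∀ A : Fin (n - 1) → ZMod 2,
        Function.Injective (fun x => L x + Bf f x A) :=
  stmt7_general n m f hfq hfAPN L c F hF0 hF1
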